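/- arXiv:2305.13807 — 3 statements merged into one kernel-verified Lean document; each statement's English description precedes it below -/
import Mathlib

section
/- Let f : [a_f, b_f] → ℝ and g₁, g₂ : domains containing [a_f, b_f] → ℝ be continuous functions such that a_{g₁} < a_f < b_f < b_{g₁} and a_{g₂} < a_f < b_f < b_{g₂}, and suppose g₁(x) ≤ f(x) for all x with equality at exactly one point p₁ ∈ (a_f, b_f), and g₂(x) ≤ f(x) for all x with equality at exactly one point p₂ ∈ (a_f, b_f), with p₁ < p₂. If g₁ and g₂ agree at exactly one point x₀ of their common domain, then p₁ < x₀ < p₂. -/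
open Set in
/-- Two curves touching the same curve from below cross between the tangency
points: if `g₁` and `g₂` touch `f` from below at `p₁ < p₂` respectively and
`g₁, g₂` agree at exactly one point `x₀` of their common domain, then
`p₁ < x₀ < p₂`. -/
theorem stmt10 (af bf ag₁ bg₁ ag₂ bg₂ p₁ p₂ x₀ : ℝ) (f g₁ g₂ : ℝ → ℝ)
    (hf : ContinuousOn f (Icc af bf))
    (hg₁ : ContinuousOn g₁ (Icc ag₁ bg₁))
    (hg₂ : ContinuousOn g₂ (Icc ag₂ bg₂))
    (h₁l : ag₁ < af) (h₁r : bf < bg₁) (h₂l : ag₂ < af) (h₂r : bf < bg₂)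
    (hle₁ : ∀ x ∈ Icc af bf, g₁ x ≤ f x)
    (hp₁ : p₁ ∈ Ioo af bf)
    (heq₁ : ∀ x ∈ Icc af bf, (g₁ x = f x ↔ x = p₁))
    (hle₂ : ∀ x ∈ Icc af bf, g₂ x ≤ f x)
    (hp₂ : p₂ ∈ Ioo af bf)
    (heq₂ : ∀ x ∈ Icc af bf, (g₂ x = f x ↔ x = p₂))
    (hpp : p₁ < p₂)
    (hx₀ : x₀ ∈ Icc (max ag₁ ag₂) (min bg₁ bg₂))
    (hagree : ∀ x ∈ Icc (max ag₁ ag₂) (min bg₁ bg₂), (g₁ x = g₂ x ↔ x = x₀)) :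
    p₁ < x₀ ∧ x₀ < p₂ := by
  obtain ⟨hp₁a, hp₁b⟩ := hp₁
  obtain ⟨hp₂a, hp₂b⟩ := hp₂
  have hp₁m : p₁ ∈ Icc af bf := ⟨hp₁a.le, hp₁b.le⟩
  have hp₂m : p₂ ∈ Icc af bf := ⟨hp₂a.le, hp₂b.le⟩
  -- common domain contains [af, bf]
  have hsub : Icc af bf ⊆ Icc (max ag₁ ag₂) (min bg₁ bg₂) := by
    intro x hx
    exact ⟨le_trans (max_le h₁l.le h₂l.le) hx.1, le_trans hx.2 (le_min h₁r.le h₂r.le)⟩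
  have hsub₁ : Icc af bf ⊆ Icc ag₁ bg₁ := fun x hx =>
    ⟨h₁l.le.trans hx.1, hx.2.trans h₁r.le⟩
  have hsub₂ : Icc af bf ⊆ Icc ag₂ bg₂ := fun x hx =>
    ⟨h₂l.le.trans hx.1, hx.2.trans h₂r.le⟩
  -- sign at p₁ and p₂
  have h1 : g₂ p₁ < g₁ p₁ := by
    have hgf : g₁ p₁ = f p₁ := (heq₁ p₁ hp₁m).2 rfl
    have h2f : g₂ p₁ ≤ f p₁ := hle₂ p₁ hp₁m
    have hne : g₂ p₁ ≠ f p₁ := fun h => hpp.ne' ((heq₂ p₁ hp₁m).1 h).symm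
    rw [hgf]; exact lt_of_le_of_ne h2f hne
  have h2 : g₁ p₂ < g₂ p₂ := by
    have hgf : g₂ p₂ = f p₂ := (heq₂ p₂ hp₂m).2 rfl
    have h1f : g₁ p₂ ≤ f p₂ := hle₁ p₂ hp₂m
    have hne : g₁ p₂ ≠ f p₂ := fun h => hpp.ne ((heq₁ p₂ hp₂m).1 h).symm
    rw [hgf]; exact lt_of_le_of_ne h1f hne
  -- IVT for h = g₂ - g₁ on [p₁, p₂]
  have hsubp : Icc p₁ p₂ ⊆ Icc af bf := Icc_subset_Icc hp₁a.le hp₂b.le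
  have hcont : ContinuousOn (fun x => g₂ x - g₁ x) (Icc p₁ p₂) :=
    ((hg₂.mono (hsubp.trans hsub₂)).sub (hg₁.mono (hsubp.trans hsub₁)))
  have hmem : (0 : ℝ) ∈ Ioo (g₂ p₁ - g₁ p₁) (g₂ p₂ - g₁ p₂) :=
    ⟨by linarith, by linarith⟩
  obtain ⟨c, hc, hc0⟩ := intermediate_value_Ioo hpp.le hcont hmem
  have hceq : g₁ c = g₂ c := by dsimp at hc0; linarith
  have hcmem : c ∈ Icc af bf := hsubp (Ioo_subset_Icc_self hc)
  have : c = x₀ := (hagree c (hsub hcmem)).1 hceq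
  exact ⟨this ▸ hc.1, this ▸ hc.2⟩
end

section
/- Let g₁, g₂ : ℝ → ℝ be continuous functions with g₁(x) < g₂(x) for x < x₀, g₁(x₀) = g₂(x₀), and g₁(x) > g₂(x) for x > x₀ (a single crossing at x₀). Let f be a continuous function on an interval [a, b] with a < x₀ < b such that f(x) ≥ max(g₁(x), g₂(x)) for all x ∈ [a, b]. Let g be a continuous function whose domain contains [a, b]. If g(x₀) < g₁(x₀) and g intersects f at some point of [a, b], then g must intersect g₁ or g₂ at some point; in particular if g is disjoint from both g₁ and g₂ on [a,b], then either g lies entirely below min(g₁,g₂) on [a,b] (and hence below f), or g(x₀) > g₁(x₀). -/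
open Set in
private lemma neg_on_Icc {a b x₀ : ℝ} {h : ℝ → ℝ}
    (hc : ContinuousOn h (Icc a b)) (hx₀ : x₀ ∈ Icc a b)
    (hneg : h x₀ < 0) (hnz : ∀ x ∈ Icc a b, h x ≠ 0) :
    ∀ x ∈ Icc a b, h x < 0 := by
  intro x hx
  by_contra hpos
  push_neg at hpos
  have hpos' : 0 < h x := lt_of_le_of_ne hpos (Ne.symm (hnz x hx))
  have hsub : uIcc x₀ x ⊆ Icc a b := uIcc_subset_Icc hx₀ hx
  have := intermediate_value_uIcc (hc.mono hsub)
  have h0 : (0 : ℝ) ∈ uIcc (h x₀) (h x) := by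
    rw [Set.mem_uIcc]; left; exact ⟨le_of_lt hneg, le_of_lt hpos'⟩
  obtain ⟨y, hy, hy0⟩ := this h0
  exact hnz y (hsub hy) hy0


open Set in
/-- Blocking: let `g₁, g₂` cross exactly once at `x₀`, let `f` lie above their
upper envelope on `[a, b]` with `a < x₀ < b`, and let `g` pass below the
crossing point (`g x₀ < g₁ x₀`). If `g` meets `f` somewhere on `[a, b]` then
`g` must meet `g₁` or `g₂`; in particular, if `g` is disjoint from both `g₁`
and `g₂` on `[a, b]`, then either `g` lies entirely below `min (g₁, g₂)` on
`[a, b]` (hence below `f`), or `g x₀ > g₁ x₀`. -/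
theorem stmt11 (a b x₀ : ℝ) (g₁ g₂ f g : ℝ → ℝ)
    (hg₁ : Continuous g₁) (hg₂ : Continuous g₂)
    (hcross₁ : ∀ x, x < x₀ → g₁ x < g₂ x)
    (hcross₀ : g₁ x₀ = g₂ x₀)
    (hcross₂ : ∀ x, x₀ < x → g₂ x < g₁ x)
    (hab : a < x₀) (hab' : x₀ < b)
    (hf : ContinuousOn f (Icc a b))
    (hfe : ∀ x ∈ Icc a b, max (g₁ x) (g₂ x) ≤ f x)
    (hg : ContinuousOn g (Icc a b)) :
    ((g x₀ < g₁ x₀ → (∃ x ∈ Icc a b, g x = f x) →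
      ∃ x ∈ Icc a b, g x = g₁ x ∨ g x = g₂ x) ∧
    ((∀ x ∈ Icc a b, g x ≠ g₁ x ∧ g x ≠ g₂ x) →
      (∀ x ∈ Icc a b, g x < min (g₁ x) (g₂ x) ∧ g x < f x) ∨ g₁ x₀ < g x₀)) := by
  have key : g x₀ < g₁ x₀ → (∀ x ∈ Icc a b, g x ≠ g₁ x ∧ g x ≠ g₂ x) →
      ∀ x ∈ Icc a b, g x < min (g₁ x) (g₂ x) ∧ g x < f x := by
    intro hlt hne
    have hx₀ : x₀ ∈ Icc a b := ⟨le_of_lt hab, le_of_lt hab'⟩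
    have h1 : ∀ x ∈ Icc a b, g x - g₁ x < 0 :=
      neg_on_Icc (hg.sub (hg₁.continuousOn)) hx₀ (by linarith)
        (fun x hx => sub_ne_zero_of_ne (hne x hx).1)
    have h2 : ∀ x ∈ Icc a b, g x - g₂ x < 0 :=
      neg_on_Icc (hg.sub (hg₂.continuousOn)) hx₀ (by rw [← hcross₀]; linarith)
        (fun x hx => sub_ne_zero_of_ne (hne x hx).2)
    intro x hx
    have e1 := h1 x hx
    have e2 := h2 x hx
    have e3 := hfe x hx
    constructor
    · simp only [lt_min_iff]; constructor <;> linarith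
    · have : g₁ x ≤ max (g₁ x) (g₂ x) := le_max_left _ _
      linarith
  constructor
  · intro hlt hmeet
    by_contra hno
    push_neg at hno
    have hne : ∀ x ∈ Icc a b, g x ≠ g₁ x ∧ g x ≠ g₂ x := by
      intro x hx
      exact ⟨(hno x hx).1, (hno x hx).2⟩
    obtain ⟨x, hx, hxf⟩ := hmeet
    exact absurd hxf (ne_of_lt ((key hlt hne x hx).2))
  · intro hne
    have hx₀ : x₀ ∈ Icc a b := ⟨le_of_lt hab, le_of_lt hab'⟩
    rcases lt_or_gt_of_ne (hne x₀ hx₀).1 with h | h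
    · exact Or.inl (key h hne)
    · exact Or.inr h
end

section
/- Let G = (B ∪ R, E) be a finite bipartite graph with parts B and R, and let < be a strict total order on E. Suppose that G contains no monotone increasing path with 7 edges whose first vertex lies in B. Then |E| ≤ 28 · (|B| + |R|). -/
/-!
Rödl's argument. Index the edges at a vertex `x` by the neighbours `y` with `s(x, y) ∈ E`.
Discarding, at every vertex, the `k` largest edges there removes at most `k |V|` edges, and
every surviving edge is followed, at each of its endpoints, by at least `k` larger edges of `E`.
So an increasing path with `k` edges among the survivors can be prolonged at its last vertex
`x`: of the at least `k` larger edges at `x`, none returns to `x` or to the previous vertex, and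
only `k - 1` other vertices are on the path. As `C(k + 1, 2) = C(k, 2) + k`, induction gives an
increasing path with `k` edges once `|E| > C(k, 2) |V|`. In a bipartite graph an increasing path
with 8 edges contains one with 7 edges starting in `B`, and `C(8, 2) = 28`.
-/

open Finset

theorem Finset.card_filter_lt_lt_card_filter_lt {β α : Type*} [LinearOrder α] {s : Finset β}
    {φ : β → α} {y y' : β} (hy' : y' ∈ s) (h : φ y < φ y') :
    #{z ∈ s | φ y' < φ z} < #{z ∈ s | φ y < φ z} :=
  card_lt_card ⟨monotone_filter_right _ fun _ _ hz => h.trans hz,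
    fun hsub => lt_irrefl _ (mem_filter.1 (hsub (mem_filter.2 ⟨hy', h⟩))).2⟩

theorem Finset.card_filter_card_filter_lt_lt_le {β α : Type*} [LinearOrder α] (s : Finset β)
    {φ : β → α} (hφ : Set.InjOn φ s) (m : ℕ) :
    #{y ∈ s | #{z ∈ s | φ y < φ z} < m} ≤ m := by
  have hinj : Set.InjOn (fun y => #{z ∈ s | φ y < φ z}) s := fun y hy y' hy' hcard => by
    by_contra hne
    rcases (hφ.ne hy hy' hne).lt_or_gt with h | h
    · exact (card_filter_lt_lt_card_filter_lt hy' h).ne' hcard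
    · exact (card_filter_lt_lt_card_filter_lt hy h).ne hcard
  simpa using card_le_card_of_injOn (t := range m) _
    (fun y hy => mem_range.2 (mem_filter.1 hy).2) (hinj.mono (filter_subset _ s))

section IncreasingPath

variable {V α : Type*} [LinearOrder α]

structure IsIncreasingPath (E : Finset (Sym2 V)) (f : Sym2 V → α) {k : ℕ}
    (v : Fin (k + 1) → V) : Prop where
  injective : Function.Injective v
  edge_mem : ∀ i : Fin k, s(v i.castSucc, v i.succ) ∈ E
  strictMono : StrictMono fun i : Fin k => f s(v i.castSucc, v i.succ)

namespace IsIncreasingPath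

variable {E : Finset (Sym2 V)} {f : Sym2 V → α} {k : ℕ} {v : Fin (k + 2) → V}

theorem init (hv : IsIncreasingPath E f v) : IsIncreasingPath E f fun i => v i.castSucc := by
  refine ⟨hv.injective.comp (Fin.castSucc_injective _), fun i => ?_, ?_⟩
  · simpa only [Fin.succ_castSucc] using hv.edge_mem i.castSucc
  · simpa only [Function.comp_def, Fin.succ_castSucc] using
      hv.strictMono.comp Fin.strictMono_castSucc

theorem tail (hv : IsIncreasingPath E f v) : IsIncreasingPath E f fun i => v i.succ := by
  refine ⟨hv.injective.comp (Fin.succ_injective _), fun i => ?_, ?_⟩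
  · simpa only [Fin.succ_castSucc] using hv.edge_mem i.succ
  · simpa only [Function.comp_def, Fin.succ_castSucc] using hv.strictMono.comp Fin.strictMono_succ

theorem exists_start_mem {B : Set V} (hB : ∀ x y, s(x, y) ∈ E → x ∈ B ∨ y ∈ B)
    (hv : IsIncreasingPath E f v) : ∃ w : Fin (k + 1) → V, IsIncreasingPath E f w ∧ w 0 ∈ B := by
  rcases hB _ _ (hv.edge_mem 0) with h | h
  · exact ⟨_, hv.init, h⟩
  · exact ⟨_, hv.tail, h⟩

end IsIncreasingPath

variable [Fintype V] [DecidableEq V]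

def edgeNbrs (E : Finset (Sym2 V)) (x : V) : Finset V := {y | s(x, y) ∈ E}

def pruneEdges (E : Finset (Sym2 V)) (f : Sym2 V → α) (k : ℕ) : Finset (Sym2 V) :=
  {e ∈ E | ∀ x ∈ e, k ≤ #{y ∈ edgeNbrs E x | f e < f s(x, y)}}

variable {E : Finset (Sym2 V)} {f : Sym2 V → α}

theorem pruneEdges_subset (k : ℕ) : pruneEdges E f k ⊆ E := filter_subset _ _

theorem card_le_card_pruneEdges_add (hf : Set.InjOn f E) (k : ℕ) :
    #E ≤ #(pruneEdges E f k) + k * Fintype.card V := by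
  set low : V → Finset V := fun x =>
    {y ∈ edgeNbrs E x | #{z ∈ edgeNbrs E x | f s(x, y) < f s(x, z)} < k}
  have hlow : ∀ x, #(low x) ≤ k := fun x =>
    card_filter_card_filter_lt_lt_le _ (fun y hy y' hy' h =>
      Sym2.congr_right.1 (hf (mem_filter.1 hy).2 (mem_filter.1 hy').2 h)) k
  have hdiscarded : {e ∈ E | ¬ ∀ x ∈ e, k ≤ #{y ∈ edgeNbrs E x | f e < f s(x, y)}} ⊆
      univ.biUnion fun x => (low x).image fun y => s(x, y) := by
    intro e he
    obtain ⟨heE, hfew⟩ := mem_filter.1 he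
    obtain ⟨x, hx, hx_few⟩ := not_forall₂.1 hfew
    obtain ⟨y, rfl⟩ := Sym2.mem_iff_exists.1 hx
    exact mem_biUnion.2 ⟨x, mem_univ _, mem_image.2
      ⟨y, mem_filter.2 ⟨mem_filter.2 ⟨mem_univ _, heE⟩, not_le.1 hx_few⟩, rfl⟩⟩
  calc #E = #(pruneEdges E f k)
        + #{e ∈ E | ¬ ∀ x ∈ e, k ≤ #{y ∈ edgeNbrs E x | f e < f s(x, y)}} :=
        (card_filter_add_card_filter_not _).symm
    _ ≤ #(pruneEdges E f k) + ∑ x, #(low x) := by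
        gcongr
        exact (card_le_card hdiscarded).trans
          (card_biUnion_le.trans (sum_le_sum fun x _ => card_image_le))
    _ ≤ #(pruneEdges E f k) + k * Fintype.card V := by
        gcongr
        simpa [mul_comm] using sum_le_sum fun x (_ : x ∈ univ) => hlow x

theorem IsIncreasingPath.exists_snoc (hE : ∀ e ∈ E, ¬ e.IsDiag) {k : ℕ} {v : Fin (k + 2) → V}
    (hv : IsIncreasingPath (pruneEdges E f (k + 1)) f v) :
    ∃ u, IsIncreasingPath E f (Fin.snoc v u : Fin (k + 3) → V) := by
  set x := v (Fin.last (k + 1))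
  set y := v (Fin.last k).castSucc
  have hlast : s(y, x) ∈ pruneEdges E f (k + 1) := hv.edge_mem (Fin.last k)
  set U := {u ∈ edgeNbrs E x | f s(y, x) < f s(x, u)}
  have hU : k + 1 ≤ #U := (mem_filter.1 hlast).2 x (Sym2.mem_mk_right _ _)
  have hyx : y ≠ x := hv.injective.ne (Fin.castSucc_lt_last _).ne
  obtain ⟨u, huU, hu⟩ : ∃ u ∈ U, u ∉ Set.range v := by
    by_contra! hU_range
    have hsub : U ⊆ ((univ.image v).erase x).erase y := by
      intro u huU
      obtain ⟨hux, hlt⟩ := mem_filter.1 huU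
      obtain ⟨i, rfl⟩ := hU_range u huU
      refine mem_erase.2 ⟨?_, mem_erase.2 ⟨?_, mem_image_of_mem v (mem_univ i)⟩⟩
      · intro hy
        exact hlt.ne (by rw [hy, Sym2.eq_swap])
      · intro hx
        exact hE _ (mem_filter.1 hux).2 (Sym2.mk_isDiag_iff.2 hx.symm)
    have := card_le_card hsub
    rw [card_erase_of_mem (mem_erase.2 ⟨hyx, mem_image_of_mem v (mem_univ _)⟩),
      card_erase_of_mem (mem_image_of_mem v (mem_univ _)),
      card_image_of_injective _ hv.injective, card_univ, Fintype.card_fin] at this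
    omega
  refine ⟨u, Fin.snoc_injective_of_injective hv.injective hu, fun i => ?_, ?_⟩
  · induction i using Fin.lastCases with
    | last =>
      simpa only [Fin.succ_last, Fin.snoc_castSucc, Fin.snoc_last] using
        (mem_filter.1 (mem_filter.1 huU).1).2
    | cast i =>
      simpa only [Fin.succ_castSucc, Fin.snoc_castSucc] using
        pruneEdges_subset _ (hv.edge_mem i)
  · refine Fin.strictMono_iff_lt_succ.2 fun i => ?_
    induction i using Fin.lastCases with
    | last =>
      simpa only [Fin.succ_castSucc, Fin.snoc_castSucc, Fin.succ_last, Fin.snoc_last] using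
        (mem_filter.1 huU).2
    | cast i =>
      simpa only [Fin.succ_castSucc, Fin.snoc_castSucc] using
        hv.strictMono Fin.castSucc_lt_succ

theorem exists_isIncreasingPath_of_choose_two_mul_card_lt (hE : ∀ e ∈ E, ¬ e.IsDiag)
    (hf : Set.InjOn f E) (k : ℕ) (hcard : (k + 1).choose 2 * Fintype.card V < #E) :
    ∃ v : Fin (k + 2) → V, IsIncreasingPath E f v := by
  induction k generalizing E with
  | zero =>
    obtain ⟨e, he⟩ := card_pos.1 (by simpa using hcard)
    induction e using Sym2.ind with
    | _ a b =>
      have hab : a ≠ b := fun h => hE _ he (Sym2.mk_isDiag_iff.2 h)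
      refine ⟨![a, b], fun i j => ?_, fun i => ?_, Subsingleton.strictMono (α := Fin 1) _⟩
      · fin_cases i <;> fin_cases j <;> simp [hab, hab.symm]
      · simpa [Fin.fin_one_eq_zero i] using he
  | succ k ih =>
    have hprune : (k + 1).choose 2 * Fintype.card V < #(pruneEdges E f (k + 1)) := by
      have := card_le_card_pruneEdges_add hf (k + 1)
      rw [Nat.choose_succ_succ', Nat.choose_one_right] at hcard
      linarith
    obtain ⟨v, hv⟩ := ih (fun e he => hE e (pruneEdges_subset _ he))
      (hf.mono (pruneEdges_subset _)) hprune
    obtain ⟨u, hu⟩ := hv.exists_snoc hE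
    exact ⟨_, hu⟩

end IncreasingPath

/-- Bipartite Rödl bound: if a finite bipartite graph with parts `B` and its
complement, with a strict total order on its edges, contains no monotone
increasing path of `7` edges starting in `B`, then it has at most
`28 * |V|` edges. -/
theorem stmt12 {V : Type*} [Fintype V] [DecidableEq V] (G : SimpleGraph V)
    [DecidableRel G.Adj] (B : Set V)
    (hbip : ∀ v w : V, G.Adj v w → (v ∈ B ↔ w ∉ B))
    (lt : G.edgeSet → G.edgeSet → Prop)
    (hto : IsTrichotomous G.edgeSet lt) (htr : IsTrans G.edgeSet lt)
    (hir : IsIrrefl G.edgeSet lt)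
    (hpath : ¬ ∃ (v : Fin 8 → V) (_ : Function.Injective v) (_ : v 0 ∈ B)
      (hadj : ∀ i : Fin 7, G.Adj (v i.castSucc) (v i.succ)),
      ∀ i j : Fin 7, i < j →
        lt ⟨s(v i.castSucc, v i.succ), G.mem_edgeSet.2 (hadj i)⟩
           ⟨s(v j.castSucc, v j.succ), G.mem_edgeSet.2 (hadj j)⟩) :
    G.edgeFinset.card ≤ 28 * Fintype.card V := by
  classical
  by_contra! hcard
  obtain ⟨e₀, he₀⟩ := card_pos.1 ((Nat.zero_le _).trans_lt hcard)
  have : IsStrictTotalOrder G.edgeSet lt := {}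
  -- `G.edgeSet` also inherits the partial order of `Sym2 V`; this local order is the one meant.
  let : LinearOrder G.edgeSet := linearOrderOfSTO lt
  let f : Sym2 V → G.edgeSet := fun e =>
    if h : e ∈ G.edgeSet then ⟨e, h⟩ else ⟨e₀, SimpleGraph.mem_edgeFinset.1 he₀⟩
  have hf_edge : ∀ e (he : e ∈ G.edgeSet), f e = ⟨e, he⟩ := fun e he => dif_pos he
  have hf : Set.InjOn f G.edgeFinset := fun a ha b hb hab => by
    rw [SimpleGraph.coe_edgeFinset] at ha hb
    simpa [hf_edge a ha, hf_edge b hb] using hab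
  obtain ⟨u, hu⟩ := exists_isIncreasingPath_of_choose_two_mul_card_lt
    (fun e he => G.not_isDiag_of_mem_edgeSet (SimpleGraph.mem_edgeFinset.1 he)) hf 7
    (by simpa [Nat.choose] using hcard)
  obtain ⟨v, hv, hvB⟩ := hu.exists_start_mem (B := B) fun x y hxy => by
    have := hbip x y (by simpa using hxy)
    tauto
  have hadj : ∀ i : Fin 7, G.Adj (v i.castSucc) (v i.succ) := fun i => by
    simpa using hv.edge_mem i
  refine hpath ⟨v, hv.injective, hvB, hadj, fun i j hij => ?_⟩
  have := hv.strictMono hij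
  dsimp only at this
  rwa [hf_edge _ (G.mem_edgeSet.2 (hadj i)), hf_edge _ (G.mem_edgeSet.2 (hadj j))] at this
end
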